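/- Let S = {g₁^(t₁),…,g_s^(t_s)} be a signature-labeled Gröbner basis for I and x^α e_j a module term. A labeled polynomial g^[v] of I with lpp(v) = x^α e_j and g ≠ 0 is a standard form of x^α e_j if and only if there is no g_i^(t_i) ∈ S such that lpp(g_i) divides lpp(g) and t·t_i ≺ x^α e_j, where t = lpp(g)/lpp(g_i). -/

import Mathlib

open MvPolynomial

noncomputable section

/-- Power products of `K[x₁,…,xₙ]`, recorded by their exponent vectors
(so `x^α ∣ x^β` is `α ≤ β` and `x^α · x^β` is `α + β`). -/
abbrev PP (n : ℕ) := Fin n →₀ ℕ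

/-- Module terms `x^α • eᵢ` of the free module `R^m`. -/
abbrev MTerm (n m : ℕ) := PP n × Fin m

/-- Multiplication of a module term by a power product. -/
def mtmul {n m : ℕ} (γ : PP n) (t : MTerm n m) : MTerm n m := (γ + t.1, t.2)

/-- A monomial order `≺₁` on the power products of `K[x₁,…,xₙ]`. -/
structure MonOrd (n : ℕ) where
  ord : LinearOrder (PP n)
  mul_lt : ∀ γ a b : PP n, ord.lt a b → ord.lt (γ + a) (γ + b)
  one_le : ∀ a : PP n, ord.le 0 a
  wf : WellFounded ord.lt

/-- A term order `≺₂` on the module terms of `R^m`: a well-order compatible with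
multiplication by power products. -/
structure ModOrd (n m : ℕ) where
  ord : LinearOrder (MTerm n m)
  mul_lt : ∀ (γ : PP n) (a b : MTerm n m), ord.lt a b → ord.lt (mtmul γ a) (mtmul γ b)
  wf : WellFounded ord.lt

variable {K : Type*} [Field K] {n m : ℕ}

/-- Elements of the free module `R^m`. -/
abbrev ModElem (K : Type*) [Field K] (n m : ℕ) := Fin m → MvPolynomial (Fin n) K

/-- `u · F = u₁f₁ + … + u_m f_m`. -/
def dotF (u : ModElem K n m) (F : Fin m → MvPolynomial (Fin n) K) : MvPolynomial (Fin n) K :=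
  ∑ i, u i * F i

/-- Leading power product of a polynomial, valued in `WithBot` so that `lppW 0 = ⊥`
(the convention `lpp 0 = 0 ≺ t` for all terms `t`). -/
def lppW (o : MonOrd n) (f : MvPolynomial (Fin n) K) : WithBot (PP n) :=
  @Finset.max (PP n) o.ord f.support

/-- Leading power product of a (nonzero) polynomial. -/
def lpp (o : MonOrd n) (f : MvPolynomial (Fin n) K) : PP n :=
  (lppW o f).unbotD 0

/-- Leading coefficient of a polynomial (`lc 0 = 0`). -/
def lc (o : MonOrd n) (f : MvPolynomial (Fin n) K) : K := f.coeff (lpp o f)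

/-- The set of module terms occurring in a module element. -/
def msupport (u : ModElem K n m) : Finset (MTerm n m) :=
  Finset.univ.biUnion fun i => (u i).support.image fun α => (α, i)

/-- Leading module term (signature) of a module element, `⊥` for the zero element. -/
def lppMW (o : ModOrd n m) (u : ModElem K n m) : WithBot (MTerm n m) :=
  @Finset.max (MTerm n m) o.ord (msupport u)

/-- Coefficient of a module element at a module term. -/
def mcoeff (u : ModElem K n m) (t : MTerm n m) : K := (u t.2).coeff t.1

/-- Leading coefficient of a module element (`0` for the zero element). -/
def lcM (o : ModOrd n m) (u : ModElem K n m) : K :=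
  WithBot.recBotCoe 0 (fun t => mcoeff u t) (lppMW o u)

/-- `⪯` on `WithBot`-valued leading power products w.r.t. `≺₁`. -/
def wbleP (o : MonOrd n) (a b : WithBot (PP n)) : Prop :=
  @LE.le (WithBot (PP n)) (@WithBot.instLE (PP n) o.ord.toLE) a b
/-- `≺` on `WithBot`-valued leading power products w.r.t. `≺₁`. -/
def wbltP (o : MonOrd n) (a b : WithBot (PP n)) : Prop :=
  @LT.lt (WithBot (PP n)) (@WithBot.instLT (PP n) o.ord.toLT) a b
/-- `⪯` on `WithBot`-valued signatures w.r.t. `≺₂`. -/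
def wbleM (o : ModOrd n m) (a b : WithBot (MTerm n m)) : Prop :=
  @LE.le (WithBot (MTerm n m)) (@WithBot.instLE (MTerm n m) o.ord.toLE) a b
/-- `≺` on `WithBot`-valued signatures w.r.t. `≺₂`. -/
def wbltM (o : ModOrd n m) (a b : WithBot (MTerm n m)) : Prop :=
  @LT.lt (WithBot (MTerm n m)) (@WithBot.instLT (MTerm n m) o.ord.toLT) a b

/-- Multiplication of a module element by a power product `x^t`. -/
def smulPP (t : PP n) (u : ModElem K n m) : ModElem K n m := fun k => monomial t (1 : K) * u k

/-- Multiplication of a module element by a polynomial. -/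
def pmul (p : MvPolynomial (Fin n) K) (u : ModElem K n m) : ModElem K n m := fun k => p * u k

/-- The `j`-th standard basis vector `e_j` of `R^m`. -/
def eVec (j : Fin m) : ModElem K n m := fun k => if k = j then 1 else 0

/-- The module element `c · x^α · e_j`. -/
def termVec (α : PP n) (c : K) (j : Fin m) : ModElem K n m :=
  fun k => if k = j then monomial α c else 0

/-- `G = {g₁^[v₁], …, g_s^[v_s]}` is a full-labeled Gröbner basis for `I = ⟨F⟩`:
each `gᵢ = vᵢ · F`, and for every labeled polynomial `f^[u]` of `I` with `f ≠ 0`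
there is `i` with `lpp(gᵢ) ∣ lpp(f)` and `lpp(t·vᵢ) ⪯ lpp(u)`, `t = lpp(f)/lpp(gᵢ)`. -/
def IsFullLGB (o1 : MonOrd n) (o2 : ModOrd n m) (F : Fin m → MvPolynomial (Fin n) K)
    {s : ℕ} (g : Fin s → MvPolynomial (Fin n) K) (v : Fin s → ModElem K n m) : Prop :=
  (∀ i, g i = dotF (v i) F) ∧
  ∀ (f : MvPolynomial (Fin n) K) (u : ModElem K n m), f = dotF u F → f ≠ 0 →
    ∃ i, g i ≠ 0 ∧ lpp o1 (g i) ≤ lpp o1 f ∧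
      wbleM o2 (lppMW o2 (smulPP (lpp o1 f - lpp o1 (g i)) (v i))) (lppMW o2 u)

/-- `S = {g₁^(t₁), …, g_s^(t_s)}` is a signature-labeled Gröbner basis for `I = ⟨F⟩`. -/
def IsSigLGB (o1 : MonOrd n) (o2 : ModOrd n m) (F : Fin m → MvPolynomial (Fin n) K)
    {s : ℕ} (g : Fin s → MvPolynomial (Fin n) K) (t : Fin s → MTerm n m) : Prop :=
  ∃ v : Fin s → ModElem K n m, (∀ i, lppMW o2 (v i) = (t i : WithBot (MTerm n m))) ∧
    IsFullLGB o1 o2 F g v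

/-- `g^[v]` is a standard form of the module term `T` in `I = ⟨F⟩`. -/
def IsStdForm (o1 : MonOrd n) (o2 : ModOrd n m) (F : Fin m → MvPolynomial (Fin n) K)
    (T : MTerm n m) (g : MvPolynomial (Fin n) K) (v : ModElem K n m) : Prop :=
  g = dotF v F ∧ lppMW o2 v = (T : WithBot (MTerm n m)) ∧
  ∀ (f : MvPolynomial (Fin n) K) (u : ModElem K n m), f = dotF u F →
    lppMW o2 u = (T : WithBot (MTerm n m)) → wbleP o1 (lppW o1 g) (lppW o1 f)

/-- `≺₂` is the position-over-term extension of `≺₁`: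
`x^α eᵢ ≺₂ x^β e_j` iff `i > j`, or `i = j` and `x^α ≺₁ x^β`. -/
def IsPOT (o1 : MonOrd n) (o2 : ModOrd n m) : Prop :=
  ∀ a b : MTerm n m, o2.ord.lt a b ↔ (b.2 < a.2 ∨ (a.2 = b.2 ∧ o1.ord.lt a.1 b.1))

/-- `f^(T)` is an admissible labeled polynomial: some `u` satisfies `f = u·F`, `lpp(u) = T`. -/
def Admissible (o2 : ModOrd n m) (F : Fin m → MvPolynomial (Fin n) K)
    (f : MvPolynomial (Fin n) K) (T : MTerm n m) : Prop :=
  ∃ u : ModElem K n m, f = dotF u F ∧ lppMW o2 u = (T : WithBot (MTerm n m))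

/-- `r` is a strict total order on the set `B` (`r p q` read: `p` was added later than `q`). -/
def StrictTotalOn {X : Type*} (B : Set X) (r : X → X → Prop) : Prop :=
  (∀ p ∈ B, ¬ r p p) ∧
  (∀ p ∈ B, ∀ q ∈ B, ∀ w ∈ B, r p q → r q w → r p w) ∧
  (∀ p ∈ B, ∀ q ∈ B, p ≠ q → r p q ∨ r q p)

/-- `tf o1 f g = lcm(lpp f, lpp g) / lpp f`. -/
def tf (o1 : MonOrd n) (f g : MvPolynomial (Fin n) K) : PP n :=
  (lpp o1 f ⊔ lpp o1 g) - lpp o1 f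

/-- `f^[u]` has a standard representation w.r.t. the set `B` of labeled polynomials. -/
def HasStdRep (o1 : MonOrd n) (o2 : ModOrd n m)
    (B : Set (MvPolynomial (Fin n) K × ModElem K n m))
    (f : MvPolynomial (Fin n) K) (u : ModElem K n m) : Prop :=
  ∃ (s : ℕ) (p : Fin s → MvPolynomial (Fin n) K)
      (q : Fin s → MvPolynomial (Fin n) K × ModElem K n m),
    (∀ i, q i ∈ B) ∧ f = ∑ i, p i * (q i).1 ∧
    (∀ i, wbleP o1 (lppW o1 (p i * (q i).1)) (lppW o1 f)) ∧
    (∀ i, wbleM o2 (lppMW o2 (pmul (p i) ((q i).2))) (lppMW o2 u))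

/-- `(t_p, p, t_q, q)` is a critical pair of labeled polynomials. -/
def IsCritPairL (o1 : MonOrd n) (o2 : ModOrd n m)
    (later : (MvPolynomial (Fin n) K × ModElem K n m) →
      (MvPolynomial (Fin n) K × ModElem K n m) → Prop)
    (p q : MvPolynomial (Fin n) K × ModElem K n m) : Prop :=
  p.1 ≠ 0 ∧ q.1 ≠ 0 ∧
  (wbltM o2 (lppMW o2 (smulPP (tf o1 q.1 p.1) q.2)) (lppMW o2 (smulPP (tf o1 p.1 q.1) p.2)) ∨
   (lppMW o2 (smulPP (tf o1 p.1 q.1) p.2) = lppMW o2 (smulPP (tf o1 q.1 p.1) q.2) ∧ later q p))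

/-- Polynomial part of the S-polynomial of a critical pair of labeled polynomials. -/
def sPolyF (o1 : MonOrd n) (p q : MvPolynomial (Fin n) K × ModElem K n m) :
    MvPolynomial (Fin n) K :=
  monomial (tf o1 p.1 q.1) (1 : K) * p.1 -
    monomial (tf o1 q.1 p.1) (lc o1 p.1 / lc o1 q.1) * q.1

/-- Label part of the S-polynomial of a critical pair of labeled polynomials. -/
def sPolyU (o1 : MonOrd n) (p q : MvPolynomial (Fin n) K × ModElem K n m) : ModElem K n m :=
  fun k => monomial (tf o1 p.1 q.1) (1 : K) * p.2 k -
    monomial (tf o1 q.1 p.1) (lc o1 p.1 / lc o1 q.1) * q.2 k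

/-- `t·p` (labeled version) is F5-divisible by `B`. -/
def F5DivL (o1 : MonOrd n) (o2 : ModOrd n m)
    (B : Set (MvPolynomial (Fin n) K × ModElem K n m)) (t : PP n)
    (p : MvPolynomial (Fin n) K × ModElem K n m) : Prop :=
  ∃ (α : PP n) (i : Fin m), lppMW o2 p.2 = (((α, i) : MTerm n m) : WithBot (MTerm n m)) ∧
    ∃ q ∈ B, q.1 ≠ 0 ∧ ∃ (β : PP n) (j : Fin m),
      lppMW o2 q.2 = (((β, j) : MTerm n m) : WithBot (MTerm n m)) ∧
      lpp o1 q.1 ≤ t + α ∧ o2.ord.lt (((0 : PP n), j) : MTerm n m) (((0 : PP n), i) : MTerm n m)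

/-- `t·p` (labeled version) is F5-rewritable by `B`. -/
def F5RewL (o2 : ModOrd n m)
    (later : (MvPolynomial (Fin n) K × ModElem K n m) →
      (MvPolynomial (Fin n) K × ModElem K n m) → Prop)
    (B : Set (MvPolynomial (Fin n) K × ModElem K n m)) (t : PP n)
    (p : MvPolynomial (Fin n) K × ModElem K n m) : Prop :=
  ∃ q ∈ B, (∃ a b : MTerm n m, lppMW o2 q.2 = (a : WithBot (MTerm n m)) ∧
    lppMW o2 (smulPP t p.2) = (b : WithBot (MTerm n m)) ∧ a.2 = b.2 ∧ a.1 ≤ b.1) ∧ later q p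

/-- A set `G` of labeled polynomials is a full-labeled Gröbner basis for `I = ⟨F⟩`. -/
def IsFullLGBSet (o1 : MonOrd n) (o2 : ModOrd n m) (F : Fin m → MvPolynomial (Fin n) K)
    (G : Set (MvPolynomial (Fin n) K × ModElem K n m)) : Prop :=
  (∀ p ∈ G, p.1 = dotF p.2 F) ∧
  ∀ (f : MvPolynomial (Fin n) K) (u : ModElem K n m), f = dotF u F → f ≠ 0 →
    ∃ p ∈ G, p.1 ≠ 0 ∧ lpp o1 p.1 ≤ lpp o1 f ∧
      wbleM o2 (lppMW o2 (smulPP (lpp o1 f - lpp o1 p.1) p.2)) (lppMW o2 u)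

/-- `t·p` (signature version, `p = f^(x^α eᵢ)`) is F5-divisible by `B`. -/
def F5DivS (o1 : MonOrd n) (o2 : ModOrd n m)
    (B : Set (MvPolynomial (Fin n) K × MTerm n m)) (t : PP n)
    (p : MvPolynomial (Fin n) K × MTerm n m) : Prop :=
  ∃ q ∈ B, q.1 ≠ 0 ∧ lpp o1 q.1 ≤ t + p.2.1 ∧
    o2.ord.lt (((0 : PP n), q.2.2) : MTerm n m) (((0 : PP n), p.2.2) : MTerm n m)

/-- `t·p` (signature version) is F5-rewritable by `B`. -/
def F5RewS
    (later : (MvPolynomial (Fin n) K × MTerm n m) →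
      (MvPolynomial (Fin n) K × MTerm n m) → Prop)
    (B : Set (MvPolynomial (Fin n) K × MTerm n m)) (t : PP n)
    (p : MvPolynomial (Fin n) K × MTerm n m) : Prop :=
  ∃ q ∈ B, q.2.2 = p.2.2 ∧ q.2.1 ≤ t + p.2.1 ∧ later q p

/-- `(t_p, p, t_q, q)` is a critical pair (signature version). -/
def IsCritPairS (o1 : MonOrd n) (o2 : ModOrd n m)
    (later : (MvPolynomial (Fin n) K × MTerm n m) →
      (MvPolynomial (Fin n) K × MTerm n m) → Prop)
    (p q : MvPolynomial (Fin n) K × MTerm n m) : Prop :=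
  p.1 ≠ 0 ∧ q.1 ≠ 0 ∧
  (o2.ord.lt (mtmul (tf o1 q.1 p.1) q.2) (mtmul (tf o1 p.1 q.1) p.2) ∨
   (mtmul (tf o1 p.1 q.1) p.2 = mtmul (tf o1 q.1 p.1) q.2 ∧ later q p))

/-- A finite set `S` of pairs `(g, t)` is a signature-labeled Gröbner basis for `I = ⟨F⟩`. -/
def IsSigLGBSet (o1 : MonOrd n) (o2 : ModOrd n m) (F : Fin m → MvPolynomial (Fin n) K)
    (S : Set (MvPolynomial (Fin n) K × MTerm n m)) : Prop :=
  S.Finite ∧ ∃ V : MvPolynomial (Fin n) K × MTerm n m → ModElem K n m,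
    (∀ p ∈ S, lppMW o2 (V p) = (p.2 : WithBot (MTerm n m))) ∧
    IsFullLGBSet o1 o2 F ((fun p => (p.1, V p)) '' S)

end

section
variable {α : Type*} (L : LinearOrder α)

private def wle (a b : WithBot α) : Prop := @LE.le (WithBot α) (@WithBot.instLE α L.toLE) a b
private def wlt (a b : WithBot α) : Prop := @LT.lt (WithBot α) (@WithBot.instLT α L.toLT) a b

private lemma wle_coe_iff {a b : α} : wle L ↑a ↑b ↔ L.le a b := by
  letI := L; exact WithBot.coe_le_coe

private lemma fmax_le {s : Finset α} {b : α} (h : ∀ a ∈ s, L.le a b) :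
    wle L (@Finset.max α L s) ↑b := by
  letI := L; exact Finset.max_le (fun a ha => by exact_mod_cast h a ha)

private lemma fle_max {s : Finset α} {a : α} (h : a ∈ s) : wle L ↑a (@Finset.max α L s) := by
  letI := L; exact Finset.le_max h

private lemma fmax_mem {s : Finset α} {a : α} (h : @Finset.max α L s = ↑a) : a ∈ s :=
  @Finset.mem_of_max α L s a h

private lemma fmax_eq {s : Finset α} {a : α} (h : a ∈ s) (h2 : ∀ b ∈ s, L.le b a) :
    @Finset.max α L s = ↑a := by
  letI := L
  exact le_antisymm (fmax_le L h2) (fle_max L h)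

private lemma fmax_lt {s : Finset α} {a : α} (h : ∀ b ∈ s, L.lt b a) :
    wlt L (@Finset.max α L s) ↑a := by
  letI := L
  show s.max < (a : WithBot α)
  cases h' : s.max with
  | bot => exact WithBot.bot_lt_coe a
  | coe y => exact WithBot.coe_lt_coe.mpr (h y (Finset.mem_of_max h'))

private lemma wle_wlt_coe {a c : α} {b : WithBot α} (h1 : wle L ↑a b) (h2 : wlt L b ↑c) :
    L.lt a c := by
  letI := L
  have h1' : (a : WithBot α) ≤ b := h1
  have h2' : b < (c : WithBot α) := h2
  exact WithBot.coe_lt_coe.mp (lt_of_le_of_lt h1' h2')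

private lemma wle_wlt_false {a : α} {b : WithBot α} (h1 : wle L ↑a b) (h2 : wlt L b ↑a) :
    False := by
  letI := L; exact lt_irrefl a (wle_wlt_coe L h1 h2)

private lemma wlt_of_not_le {a : α} {b : WithBot α} (h : ¬ wle L ↑a b) : wlt L b ↑a := by
  letI := L
  have h' : ¬ ((a : WithBot α) ≤ b) := h
  show b < (a : WithBot α)
  exact lt_of_not_ge h'

private lemma Llt_of_le_of_lt {a b c : α} (h1 : L.le a b) (h2 : L.lt b c) : L.lt a c := by
  letI := L; exact lt_of_le_of_lt h1 h2

private lemma Lle_of_le_of_lt {a b c : α} (h1 : L.le a b) (h2 : L.lt b c) : L.le a c := by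
  letI := L; exact le_of_lt (lt_of_le_of_lt h1 h2)

private lemma Llt_of_le_ne {a b : α} (h1 : L.le a b) (h2 : a ≠ b) : L.lt a b := by
  letI := L; exact lt_of_le_of_ne h1 h2

private lemma Lnot_lt_of_le {a b : α} (h1 : L.le a b) : ¬ L.lt b a := by
  letI := L; exact not_lt_of_ge h1

private lemma Lle_of_eq_or_lt {a b : α} (h : a = b ∨ L.lt a b) : L.le a b := by
  letI := L; rcases h with h | h; exacts [le_of_eq h, le_of_lt h]

private lemma Lle_iff_eq_or_lt {a b : α} : L.le a b ↔ a = b ∨ L.lt a b := by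
  letI := L; rw [le_iff_eq_or_lt]
end
noncomputable section DomainHelpers
variable {K : Type*} [Field K] {n m : ℕ}

private lemma lppW_eq_of (o1 : MonOrd n) {f : MvPolynomial (Fin n) K} {b : PP n}
    (hb : f.coeff b ≠ 0) (hall : ∀ a, f.coeff a ≠ 0 → o1.ord.le a b) : lppW o1 f = ↑b :=
  fmax_eq o1.ord (MvPolynomial.mem_support_iff.mpr hb)
    (fun a ha => hall a (MvPolynomial.mem_support_iff.mp ha))

private lemma lppW_lt_of (o1 : MonOrd n) {f : MvPolynomial (Fin n) K} {b : PP n}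
    (hall : ∀ a, f.coeff a ≠ 0 → o1.ord.lt a b) : wlt o1.ord (lppW o1 f) ↑b :=
  fmax_lt o1.ord (fun a ha => hall a (MvPolynomial.mem_support_iff.mp ha))

private lemma lppW_coe (o1 : MonOrd n) {f : MvPolynomial (Fin n) K} (hf : f ≠ 0) :
    lppW o1 f = ↑(lpp o1 f) ∧ f.coeff (lpp o1 f) ≠ 0 ∧
      ∀ a, f.coeff a ≠ 0 → o1.ord.le a (lpp o1 f) := by
  have h0 : lppW o1 f ≠ ⊥ := by
    rw [lppW, Ne, @Finset.max_eq_bot _ o1.ord, MvPolynomial.support_eq_empty]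
    exact hf
  obtain ⟨c, hc⟩ : ∃ c : PP n, lppW o1 f = ↑c := by
    cases h : lppW o1 f with
    | bot => exact absurd h h0
    | coe c => exact ⟨c, rfl⟩
  have hl : lpp o1 f = c := by rw [lpp, hc]; rfl
  rw [hl]
  refine ⟨hc, MvPolynomial.mem_support_iff.mp (fmax_mem o1.ord hc), fun a ha => ?_⟩
  have := fle_max o1.ord (s := f.support) (MvPolynomial.mem_support_iff.mpr ha)
  have hc' : @Finset.max (PP n) o1.ord f.support = ((c : PP n) : WithBot (PP n)) := hc
  rw [hc'] at this
  exact (wle_coe_iff o1.ord).mp this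

private lemma mem_msupport {u : ModElem K n m} {t : MTerm n m} :
    t ∈ msupport u ↔ mcoeff u t ≠ 0 := by
  obtain ⟨a, i⟩ := t
  simp only [msupport, mcoeff, Finset.mem_biUnion, Finset.mem_univ, true_and,
    Finset.mem_image, MvPolynomial.mem_support_iff, Prod.mk.injEq]
  constructor
  · rintro ⟨j, α, hα, rfl, rfl⟩; exact hα
  · intro h; exact ⟨i, a, h, rfl, rfl⟩

private lemma lppMW_eq_of (o2 : ModOrd n m) {u : ModElem K n m} {T : MTerm n m}
    (hb : mcoeff u T ≠ 0) (hall : ∀ t, mcoeff u t ≠ 0 → o2.ord.le t T) :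
    lppMW o2 u = ↑T :=
  fmax_eq o2.ord (mem_msupport.mpr hb) (fun t ht => hall t (mem_msupport.mp ht))

private lemma lppMW_lt_of (o2 : ModOrd n m) {u : ModElem K n m} {T : MTerm n m}
    (hall : ∀ t, mcoeff u t ≠ 0 → o2.ord.lt t T) : wlt o2.ord (lppMW o2 u) ↑T :=
  fmax_lt o2.ord (fun t ht => hall t (mem_msupport.mp ht))

private lemma lppMW_coe_spec (o2 : ModOrd n m) {u : ModElem K n m} {T : MTerm n m}
    (h : lppMW o2 u = ↑T) :
    mcoeff u T ≠ 0 ∧ ∀ t, mcoeff u t ≠ 0 → o2.ord.le t T := by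
  refine ⟨mem_msupport.mp (fmax_mem o2.ord h), fun t ht => ?_⟩
  have h2 := fle_max o2.ord (s := msupport u) (mem_msupport.mpr ht)
  have hc' : @Finset.max (MTerm n m) o2.ord (msupport u) = ((T : MTerm n m) : WithBot (MTerm n m)) := h
  rw [hc'] at h2
  exact (wle_coe_iff o2.ord).mp h2

private lemma mcoeff_sub_Cmul {v u : ModElem K n m} {c : K} {t : MTerm n m} :
    mcoeff (fun k => v k - MvPolynomial.C c * u k) t = mcoeff v t - c * mcoeff u t := by
  simp [mcoeff, MvPolynomial.coeff_sub, MvPolynomial.coeff_C_mul]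

private lemma dotF_sub_Cmul {v u : ModElem K n m} {c : K} {F : Fin m → MvPolynomial (Fin n) K} :
    dotF (fun k => v k - MvPolynomial.C c * u k) F = dotF v F - MvPolynomial.C c * dotF u F := by
  simp [dotF, sub_mul, mul_assoc, Finset.sum_sub_distrib, Finset.mul_sum]

private lemma dotF_smulPP {u : ModElem K n m} {τ : PP n} {F : Fin m → MvPolynomial (Fin n) K} :
    dotF (smulPP τ u) F = MvPolynomial.monomial τ 1 * dotF u F := by
  simp [dotF, smulPP, Finset.mul_sum, mul_assoc]

private lemma mcoeff_smulPP_mtmul {u : ModElem K n m} (τ : PP n) (t : MTerm n m) :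
    mcoeff (smulPP τ u) (mtmul τ t) = mcoeff u t := by
  simp [mcoeff, smulPP, mtmul, MvPolynomial.coeff_monomial_mul]

private lemma mcoeff_smulPP {u : ModElem K n m} (τ : PP n) (a : PP n) (i : Fin m) :
    mcoeff (smulPP τ u) (a, i) = if τ ≤ a then (u i).coeff (a - τ) else 0 := by
  simp [mcoeff, smulPP, MvPolynomial.coeff_monomial_mul']

private lemma mtmul_le (o2 : ModOrd n m) (τ : PP n) {a b : MTerm n m}
    (h : o2.ord.le a b) : o2.ord.le (mtmul τ a) (mtmul τ b) := by
  rcases (Lle_iff_eq_or_lt o2.ord).mp h with h | h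
  · exact Lle_of_eq_or_lt o2.ord (Or.inl (by rw [h]))
  · exact Lle_of_eq_or_lt o2.ord (Or.inr (o2.mul_lt τ a b h))

private lemma o1_add_le (o1 : MonOrd n) (τ : PP n) {a b : PP n}
    (h : o1.ord.le a b) : o1.ord.le (τ + a) (τ + b) := by
  rcases (Lle_iff_eq_or_lt o1.ord).mp h with h | h
  · exact Lle_of_eq_or_lt o1.ord (Or.inl (by rw [h]))
  · exact Lle_of_eq_or_lt o1.ord (Or.inr (o1.mul_lt τ a b h))

private lemma lppMW_smulPP (o2 : ModOrd n m) {u : ModElem K n m} {b : MTerm n m} (τ : PP n)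
    (h : lppMW o2 u = ↑b) : lppMW o2 (smulPP τ u) = ↑(mtmul τ b) := by
  obtain ⟨h1, h2⟩ := lppMW_coe_spec o2 h
  apply lppMW_eq_of
  · rw [mcoeff_smulPP_mtmul]; exact h1
  · rintro ⟨a, i⟩ ht
    rw [mcoeff_smulPP] at ht
    by_cases hτ : τ ≤ a
    · rw [if_pos hτ] at ht
      have h3 : mcoeff u (a - τ, i) ≠ 0 := ht
      have h4 := mtmul_le o2 τ (h2 _ h3)
      rwa [show mtmul τ (a - τ, i) = (a, i) from by
        simp [mtmul, add_tsub_cancel_of_le hτ]] at h4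
    · rw [if_neg hτ] at ht; exact absurd rfl ht

end DomainHelpers

/-- Given a signature-labeled Gröbner basis `S` for `I`, a labeled polynomial
`g^[v]` of `I` with `lpp(v) = T` and `g ≠ 0` is a standard form of `T` iff no `gᵢ^(tᵢ) ∈ S`
satisfies `lpp(gᵢ) ∣ lpp(g)` and `t·tᵢ ≺ T` where `t = lpp(g)/lpp(gᵢ)`. -/
theorem detachability_stmt4 {K : Type*} [Field K] {n m : ℕ}
    (o1 : MonOrd n) (o2 : ModOrd n m) (F : Fin m → MvPolynomial (Fin n) K)
    {s : ℕ} (gs : Fin s → MvPolynomial (Fin n) K) (ts : Fin s → MTerm n m)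
    (hS : IsSigLGB o1 o2 F gs ts)
    (T : MTerm n m) (g : MvPolynomial (Fin n) K) (v : ModElem K n m)
    (hgv : g = dotF v F) (hlppv : lppMW o2 v = (T : WithBot (MTerm n m))) (hg : g ≠ 0) :
    IsStdForm o1 o2 F T g v ↔
      ¬ ∃ i, gs i ≠ 0 ∧ lpp o1 (gs i) ≤ lpp o1 g ∧
        o2.ord.lt (mtmul (lpp o1 g - lpp o1 (gs i)) (ts i)) T := by
  obtain ⟨vv, hvt, hFg, hGB⟩ := hS
  obtain ⟨hWg, hlcg, hbg⟩ := lppW_coe o1 hg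
  obtain ⟨hv1, hv2⟩ := lppMW_coe_spec o2 hlppv
  constructor
  · rintro hstd ⟨i, hgi0, hdiv, hlt⟩
    obtain ⟨hWgi, hlcgi, hbgi⟩ := lppW_coe o1 hgi0
    set τ : PP n := lpp o1 g - lpp o1 (gs i) with hτdef
    have hτ : τ + lpp o1 (gs i) = lpp o1 g := tsub_add_cancel_of_le hdiv
    set c : K := g.coeff (lpp o1 g) / (gs i).coeff (lpp o1 (gs i)) with hcdef
    set u' : ModElem K n m := fun k => v k - MvPolynomial.C c * (smulPP τ (vv i)) k with hu'def
    set f' : MvPolynomial (Fin n) K :=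
      g - MvPolynomial.C c * (MvPolynomial.monomial τ 1 * gs i) with hf'def
    have hf'u' : f' = dotF u' F := by
      rw [hf'def, hu'def, dotF_sub_Cmul, dotF_smulPP, ← hgv, ← hFg i]
    have hsig : lppMW o2 (smulPP τ (vv i)) = ↑(mtmul τ (ts i)) := lppMW_smulPP o2 τ (hvt i)
    obtain ⟨hs1, hs2⟩ := lppMW_coe_spec o2 hsig
    have hu'T : lppMW o2 u' = (T : WithBot (MTerm n m)) := by
      apply lppMW_eq_of
      · rw [hu'def, mcoeff_sub_Cmul]
        have hz : mcoeff (smulPP τ (vv i)) T = 0 := by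
          by_contra h
          exact Lnot_lt_of_le o2.ord (hs2 T h) hlt
        rw [hz, mul_zero, sub_zero]
        exact hv1
      · intro t ht
        rw [hu'def, mcoeff_sub_Cmul] at ht
        by_cases h1 : mcoeff v t ≠ 0
        · exact hv2 t h1
        · have h2 : mcoeff (smulPP τ (vv i)) t ≠ 0 := by
            intro h2
            rw [not_not.mp h1, h2, mul_zero, sub_zero] at ht
            exact ht rfl
          exact Lle_of_le_of_lt o2.ord (hs2 t h2) hlt
    have hstrict : wlt o1.ord (lppW o1 f') ↑(lpp o1 g) := by
      apply lppW_lt_of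
      intro a ha
      have hle : o1.ord.le a (lpp o1 g) := by
        by_cases h1 : g.coeff a ≠ 0
        · exact hbg a h1
        · have h2 : (MvPolynomial.monomial τ 1 * gs i).coeff a ≠ 0 := by
            intro h2
            rw [hf'def] at ha
            rw [MvPolynomial.coeff_sub, MvPolynomial.coeff_C_mul, not_not.mp h1, h2,
              mul_zero, sub_zero] at ha
            exact ha rfl
          rw [MvPolynomial.coeff_monomial_mul'] at h2
          by_cases hτa : τ ≤ a
          · rw [if_pos hτa, one_mul] at h2
            have h3 := o1_add_le o1 τ (hbgi _ h2)
            rwa [hτ, add_tsub_cancel_of_le hτa] at h3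
          · rw [if_neg hτa] at h2; exact absurd rfl h2
      have hne : a ≠ lpp o1 g := by
        intro he
        subst he
        have hmm : (MvPolynomial.monomial τ 1 * gs i).coeff (lpp o1 g)
            = (gs i).coeff (lpp o1 (gs i)) := by
          rw [← hτ, MvPolynomial.coeff_monomial_mul, one_mul]
        rw [hf'def, MvPolynomial.coeff_sub, MvPolynomial.coeff_C_mul, hmm, hcdef,
          div_mul_cancel₀ _ hlcgi, sub_self] at ha
        exact ha rfl
      exact Llt_of_le_ne o1.ord hle hne
    have hcon := hstd.2.2 f' u' hf'u' hu'T
    have hcon' : wle o1.ord ↑(lpp o1 g) (lppW o1 f') := by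
      rw [← hWg]; exact hcon
    exact wle_wlt_false o1.ord hcon' hstrict
  · intro H
    refine ⟨hgv, hlppv, ?_⟩
    intro f u hfu huT
    by_contra hcon
    have hflt : wlt o1.ord (lppW o1 f) ↑(lpp o1 g) := by
      apply wlt_of_not_le
      intro h
      exact hcon (by rw [hWg]; exact h)
    have hf0 : f.coeff (lpp o1 g) = 0 := by
      by_contra h
      exact wle_wlt_false o1.ord
        (fle_max o1.ord (s := f.support) (MvPolynomial.mem_support_iff.mpr h)) hflt
    obtain ⟨hu1, hu2⟩ := lppMW_coe_spec o2 huT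
    set c : K := mcoeff v T / mcoeff u T with hcdef
    set w : ModElem K n m := fun k => v k - MvPolynomial.C c * u k with hwdef
    set h' : MvPolynomial (Fin n) K := g - MvPolynomial.C c * f with hh'def
    have hdot : h' = dotF w F := by
      rw [hh'def, hwdef, dotF_sub_Cmul, ← hgv, ← hfu]
    have hch : h'.coeff (lpp o1 g) ≠ 0 := by
      rw [hh'def, MvPolynomial.coeff_sub, MvPolynomial.coeff_C_mul, hf0, mul_zero, sub_zero]
      exact hlcg
    have hh0 : h' ≠ 0 := fun he => hch (by rw [he]; simp)
    have hWh : lppW o1 h' = ↑(lpp o1 g) := by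
      apply lppW_eq_of o1 hch
      intro a ha
      by_cases h1 : g.coeff a ≠ 0
      · exact hbg a h1
      · have h2 : f.coeff a ≠ 0 := by
          intro h2
          rw [hh'def, MvPolynomial.coeff_sub, MvPolynomial.coeff_C_mul, not_not.mp h1, h2,
            mul_zero, sub_zero] at ha
          exact ha rfl
        exact Lle_of_eq_or_lt o1.ord (Or.inr (wle_wlt_coe o1.ord
          (fle_max o1.ord (s := f.support) (MvPolynomial.mem_support_iff.mpr h2)) hflt))
    have hlph : lpp o1 h' = lpp o1 g := by rw [lpp, hWh]; rfl
    have hwlt : wlt o2.ord (lppMW o2 w) ↑T := by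
      apply lppMW_lt_of
      intro t ht
      have hle : o2.ord.le t T := by
        rw [hwdef, mcoeff_sub_Cmul] at ht
        by_cases h1 : mcoeff v t ≠ 0
        · exact hv2 t h1
        · have h2 : mcoeff u t ≠ 0 := by
            intro h2
            rw [not_not.mp h1, h2, mul_zero, sub_zero] at ht
            exact ht rfl
          exact hu2 t h2
      have hne : t ≠ T := by
        intro he
        subst he
        rw [hwdef, mcoeff_sub_Cmul, hcdef, div_mul_cancel₀ _ hu1, sub_self] at ht
        exact ht rfl
      exact Llt_of_le_ne o2.ord hle hne
    obtain ⟨i, hgi0, hdvd, hsigle⟩ := hGB h' w hdot hh0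
    rw [hlph] at hdvd hsigle
    have hsmul : lppMW o2 (smulPP (lpp o1 g - lpp o1 (gs i)) (vv i)) =
        ↑(mtmul (lpp o1 g - lpp o1 (gs i)) (ts i)) := lppMW_smulPP o2 _ (hvt i)
    have hle2 : wle o2.ord ↑(mtmul (lpp o1 g - lpp o1 (gs i)) (ts i)) (lppMW o2 w) := by
      rw [← hsmul]; exact hsigle
    exact H ⟨i, hgi0, hdvd, wle_wlt_coe o2.ord hle2 hwlt⟩
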